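/- For every finite sequence of nonzero c.e. Turing degrees a_1, ..., a_k there exist c.e. sets U ⊆ V such that for every Turing degree x: there exists an x-computable set X with U ⊆ X ⊆ V if and only if a_i ≤ x for some i ∈ {1,...,k}. -/

import Mathlib

/-!
Call `U ⊆ V` a realisation of a list of sets (`IsSeparatorBasis`) if every member of the list
computes a separator `U ⊆ X ⊆ V` and every separator computes a member. Induction on the list
`A₁, …, A_k`: the empty list is realised by `U = ℕ`, `V = ∅`. Given `U' ⊆ V'` realising
`A₂, …, A_k` and enumerations `B_s` of `B = A₁` and `V'_s` of `V'`, read positions as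
triples `q = ⟨⟨x, t⟩, v⟩`, call `q` late if `x ∈ B \ B_t`, and put
* `q ∈ U` iff `q` is late and some `p ≤ t` in `U'` is outside `V'_v`,
* `q ∈ V` iff `q` is late or some `p ≤ t` in `V'` is outside `V'_v`.

The late positions form a `B`-computable separator, and a separator `X'` of `U' ⊆ V'` gives the
`X'`-computable separator "some `p ≤ t` in `X'` is outside `V'_v`". Conversely let `U ⊆ X ⊆ V`.
If `X` contains every late position with `t > n`, then `X` computes `B`: for `v` with
`V' ∩ [0, n + 1] ⊆ V'_v`, `x ∈ B` iff `x ∈ B_{n+1}` or `⟨⟨x, n + 1⟩, v⟩ ∈ X`. Otherwise `X` can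
find, for each `p`, a late `q ∉ X` with `t > p`; as `q ∉ U`, every element of `U'` up to `t` lies
in `V'_v`, so `{p | p ∈ V'_v(p)}` is an `X`-computable separator of `U' ⊆ V'`.
-/

open Classical in
/-- Characteristic function of a set of naturals. -/
noncomputable def chi (A : Set ℕ) : ℕ → ℕ := fun n => if n ∈ A then 1 else 0

/-- Partial functions computable relative to an oracle `O : ℕ → ℕ`. -/
inductive RecursiveIn' (O : ℕ → ℕ) : (ℕ →. ℕ) → Prop
  | zero : RecursiveIn' O (pure 0)
  | succ : RecursiveIn' O Nat.succ
  | left : RecursiveIn' O ↑fun n : ℕ => n.unpair.1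
  | right : RecursiveIn' O ↑fun n : ℕ => n.unpair.2
  | oracle : RecursiveIn' O ↑O
  | pair {f g} : RecursiveIn' O f → RecursiveIn' O g →
      RecursiveIn' O fun n => Nat.pair <$> f n <*> g n
  | comp {f g} : RecursiveIn' O f → RecursiveIn' O g →
      RecursiveIn' O fun n => g n >>= f
  | prec {f g} : RecursiveIn' O f → RecursiveIn' O g →
      RecursiveIn' O (Nat.unpaired fun a n =>
        n.rec (f a) fun y IH => do let i ← IH; g (Nat.pair a (Nat.pair y i)))
  | rfind {f} : RecursiveIn' O f →
      RecursiveIn' O fun a => Nat.rfind fun n => (fun m => m = 0) <$> f (Nat.pair a n)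

/-- Turing reducibility between sets of naturals: `A ≤_T B`. -/
def SetTuringRed (A B : Set ℕ) : Prop := RecursiveIn' (chi B) ↑(chi A)

/-- `A` is computably enumerable. -/
def CE (A : Set ℕ) : Prop := ∃ f : ℕ →. ℕ, Nat.Partrec f ∧ ∀ n, n ∈ A ↔ (f n).Dom

/-- `A` is c.e. relative to the oracle `O`. -/
def CEIn (O : ℕ → ℕ) (A : Set ℕ) : Prop :=
  ∃ f : ℕ →. ℕ, RecursiveIn' O f ∧ ∀ n, n ∈ A ↔ (f n).Dom

/-- A uniformly c.e. sequence of sets. -/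
def UnifCE (A : ℕ → Set ℕ) : Prop :=
  ∃ f : ℕ →. ℕ, Nat.Partrec f ∧ ∀ i x, x ∈ A i ↔ (f (Nat.pair i x)).Dom


namespace RecursiveIn'

variable {O : ℕ → ℕ}

theorem of_eq {f g : ℕ →. ℕ} (hf : RecursiveIn' O f) (H : ∀ n, f n = g n) : RecursiveIn' O g :=
  funext H ▸ hf

theorem of_partrec {f : ℕ →. ℕ} (hf : Nat.Partrec f) : RecursiveIn' O f := by
  induction hf with
  | zero => exact .zero
  | succ => exact .succ
  | left => exact .left
  | right => exact .right
  | pair _ _ ihf ihg => exact .pair ihf ihg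
  | comp _ _ ihf ihg => exact .comp ihf ihg
  | prec _ _ ihf ihg => exact .prec ihf ihg
  | rfind _ ih => exact .rfind ih

theorem of_computable {f : ℕ → ℕ} (hf : Computable f) : RecursiveIn' O ↑f :=
  of_partrec (Partrec.nat_iff.1 hf.partrec)

theorem trans {P : ℕ → ℕ} {f : ℕ →. ℕ} (hf : RecursiveIn' P f) (hP : RecursiveIn' O ↑P) :
    RecursiveIn' O f := by
  induction hf with
  | zero => exact .zero
  | succ => exact .succ
  | left => exact .left
  | right => exact .right
  | oracle => exact hP
  | pair _ _ ihf ihg => exact .pair ihf ihg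
  | comp _ _ ihf ihg => exact .comp ihf ihg
  | prec _ _ ihf ihg => exact .prec ihf ihg
  | rfind _ ih => exact .rfind ih

theorem comp_total {f g : ℕ → ℕ} (hf : RecursiveIn' O ↑f) (hg : RecursiveIn' O ↑g) :
    RecursiveIn' O ↑fun n => f (g n) :=
  (comp hf hg).of_eq fun n => Part.eq_some_iff.2 (Part.mem_bind (Part.mem_some _) (by simp))

theorem oracle_comp {e : ℕ → ℕ} (he : Computable e) : RecursiveIn' O ↑fun n => O (e n) :=
  comp_total oracle (of_computable he)

theorem comp₂ {F : ℕ → ℕ → ℕ} (hF : Computable₂ F) {f g : ℕ → ℕ} (hf : RecursiveIn' O ↑f)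
    (hg : RecursiveIn' O ↑g) : RecursiveIn' O ↑fun n => F (f n) (g n) := by
  have hF' : Computable fun m : ℕ => F m.unpair.1 m.unpair.2 :=
    hF.comp (Computable.fst.comp Computable.unpair) (Computable.snd.comp Computable.unpair)
  have hpair : RecursiveIn' O ↑fun n => Nat.pair (f n) (g n) :=
    (pair hf hg).of_eq fun n => by simp [Seq.seq]
  exact (comp_total (of_computable hF') hpair).of_eq fun n => by simp

theorem sum_range {f : ℕ → ℕ → ℕ} (hf : RecursiveIn' O ↑fun m : ℕ => f m.unpair.1 m.unpair.2) :
    RecursiveIn' O ↑fun m : ℕ => ∑ i ∈ Finset.range m.unpair.2, f m.unpair.1 i := by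
  -- `prec` applies the step function to `⟨a, ⟨y, value at y⟩⟩`.
  have hstep : RecursiveIn' O ↑fun z : ℕ =>
      z.unpair.2.unpair.2 + f z.unpair.1 z.unpair.2.unpair.1 := by
    refine comp₂ Primrec.nat_add.to_comp
      (of_computable ((Computable.snd.comp Computable.unpair).comp
        (Computable.snd.comp Computable.unpair)))
      ((comp_total hf (of_computable (f := fun z : ℕ => Nat.pair z.unpair.1 z.unpair.2.unpair.1)
        ?_)).of_eq fun z => by simp)
    exact Primrec₂.natPair.to_comp.comp (Computable.fst.comp Computable.unpair)
      ((Computable.fst.comp Computable.unpair).comp (Computable.snd.comp Computable.unpair))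
  refine (prec zero hstep).of_eq fun m => ?_
  simp only [Nat.unpaired, PFun.coe_val]
  induction m.unpair.2 with
  | zero => rfl
  | succ n ih =>
    simp only [Nat.unpair_pair, Part.bind_eq_bind] at ih ⊢
    simp [ih, Finset.sum_range_succ]

theorem exists_choice {R : Set ℕ} (hR : RecursiveIn' O ↑(chi R))
    (hex : ∀ a, ∃ n, Nat.pair a n ∈ R) :
    ∃ h : ℕ → ℕ, RecursiveIn' O ↑h ∧ ∀ a, Nat.pair a (h a) ∈ R := by
  classical
  refine ⟨fun a => Nat.find (hex a), ?_, fun a => Nat.find_spec (hex a)⟩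
  have hsub : RecursiveIn' O ↑fun m => 1 - chi R m :=
    comp_total (f := fun b => 1 - b)
      (of_computable (Primrec.nat_sub.comp (Primrec.const 1) Primrec.id).to_comp) hR
  refine (rfind hsub).of_eq fun a =>
    Part.eq_some_iff.2 (Nat.mem_rfind.2 ⟨?_, fun hm => ?_⟩)
  · simp [chi, Nat.find_spec (hex a)]
  · simp [chi, Nat.find_min (hex a) hm]

end RecursiveIn'

@[simp]
theorem chi_eq_one {A : Set ℕ} {x : ℕ} : chi A x = 1 ↔ x ∈ A := by
  by_cases h : x ∈ A <;> simp [chi, h]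

@[simp]
theorem chi_eq_zero {A : Set ℕ} {x : ℕ} : chi A x = 0 ↔ x ∉ A := by
  by_cases h : x ∈ A <;> simp [chi, h]

namespace SetTuringRed

theorem trans {A B C : Set ℕ} (hAB : SetTuringRed A B) (hBC : SetTuringRed B C) :
    SetTuringRed A C :=
  RecursiveIn'.trans hAB hBC

theorem of_mem_iff {X Y : Set ℕ} {p : ℕ → ℕ → Bool} (hp : Computable₂ p) {g : ℕ → ℕ}
    (hg : RecursiveIn' (chi Y) ↑g) (hX : ∀ n, n ∈ X ↔ p n (g n) = true) :
    SetTuringRed X Y := by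
  have hcond : Computable₂ fun n b => cond (p n b) 1 0 :=
    Computable.cond hp (Computable.const 1) (Computable.const 0)
  refine (RecursiveIn'.comp₂ hcond (RecursiveIn'.of_computable Computable.id) hg).of_eq
    fun n => ?_
  cases h : p n (g n) <;> simp [chi, hX, h]

theorem exists_le {S : Set ℕ} {b : ℕ → ℕ} (hb : Primrec b) {R : ℕ → ℕ → Prop}
    (hR : PrimrecRel R) : SetTuringRed {q | ∃ p ≤ b q, p ∈ S ∧ R q p} S := by
  classical
  let term : ℕ → ℕ → ℕ := fun q p => if R q p then chi S p else 0
  have hterm : RecursiveIn' (chi S) ↑fun m : ℕ => term m.unpair.1 m.unpair.2 := by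
    have hR' : Primrec fun m : ℕ => decide (R m.unpair.1 m.unpair.2) :=
      hR.decide.comp (Primrec.fst.comp Primrec.unpair) (Primrec.snd.comp Primrec.unpair)
    refine (RecursiveIn'.comp₂ (F := fun m c => cond (decide (R m.unpair.1 m.unpair.2)) c 0)
      ?_ (RecursiveIn'.of_computable Computable.id)
      (RecursiveIn'.oracle_comp (Computable.snd.comp Computable.unpair))).of_eq fun m => ?_
    · exact (Primrec.cond (hR'.comp Primrec.fst) Primrec.snd (Primrec.const 0)).to_comp
    · by_cases h : R m.unpair.1 m.unpair.2 <;> simp [term, h]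
  have hsum : RecursiveIn' (chi S) ↑fun q => ∑ p ∈ Finset.range (b q + 1), term q p :=
    (RecursiveIn'.comp_total (RecursiveIn'.sum_range hterm) (RecursiveIn'.of_computable
      (Primrec₂.natPair.comp Primrec.id (Primrec.succ.comp hb)).to_comp)).of_eq
      fun q => by simp
  refine of_mem_iff (p := fun _ c => c != 0) ?_ hsum fun q => ?_
  · exact (Primrec.not.comp (Primrec.beq.comp Primrec.snd (Primrec.const 0))).to_comp
  · simp [term, Finset.sum_eq_zero_iff, and_comm]

end SetTuringRed

/-- A stage-by-stage enumeration of `A`: `W s x` says that `x` has been enumerated by stage `s`,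
as for the usual `W_{e,s}`. -/
structure Enumeration (A : Set ℕ) where
  W : ℕ → ℕ → Bool
  primrec : Primrec₂ W
  mono : ∀ {s s' x}, s ≤ s' → W s x = true → W s' x = true
  mem_iff : ∀ x, x ∈ A ↔ ∃ s, W s x = true

theorem ce_setOf_exists {W : ℕ → ℕ → Bool} (hW : Computable₂ W) :
    CE {x | ∃ s, W s x = true} := by
  refine ⟨fun x => Nat.rfind fun s => Part.some (W s x), ?_, fun x => ?_⟩
  · exact Partrec.nat_iff.1
      (Partrec.rfind (Partrec.some.comp (hW.comp Computable.snd Computable.fst)))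
  · refine Iff.trans ?_ (Nat.rfind_dom (p := fun s => Part.some (W s x))).symm
    exact ⟨fun ⟨s, hs⟩ => ⟨s, by simpa using hs, fun _ => trivial⟩,
      fun ⟨s, hs, _⟩ => ⟨s, by simpa using hs⟩⟩

theorem Enumeration.ce {A : Set ℕ} (E : Enumeration A) : CE A := by
  convert ce_setOf_exists E.primrec.to_comp
  exact Set.ext E.mem_iff

theorem CE.nonempty_enumeration {A : Set ℕ} (h : CE A) : Nonempty (Enumeration A) := by
  obtain ⟨f, hf, hmem⟩ := h
  obtain ⟨c, rfl⟩ := Nat.Partrec.Code.exists_code.1 hf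
  refine ⟨fun s x => (Nat.Partrec.Code.evaln s c x).isSome, ?_, ?_, fun x => ?_⟩
  · exact Primrec.option_isSome.comp (Nat.Partrec.Code.primrec_evaln.comp
      ((Primrec.fst.pair (Primrec.const c)).pair Primrec.snd))
  · intro s s' x hss h
    obtain ⟨y, hy⟩ := Option.isSome_iff_exists.1 h
    exact Option.isSome_iff_exists.2 ⟨y, Nat.Partrec.Code.evaln_mono hss hy⟩
  · simp only [hmem x, Part.dom_iff_mem, Option.isSome_iff_exists, Nat.Partrec.Code.evaln_complete,
      Option.mem_def]
    exact ⟨fun ⟨y, s, hs⟩ => ⟨s, y, hs⟩, fun ⟨s, y, hs⟩ => ⟨y, s, hs⟩⟩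

theorem Enumeration.exists_stage_forall_le {A : Set ℕ} (E : Enumeration A) (n : ℕ) :
    ∃ s, ∀ p ≤ n, p ∈ A → E.W s p = true := by
  choose! stage hstage using fun p (hp : p ∈ A) => (E.mem_iff p).1 hp
  refine ⟨∑ p ∈ Finset.range (n + 1), stage p, fun p hp hpA => E.mono ?_ (hstage p hpA)⟩
  exact Finset.single_le_sum (fun _ _ => Nat.zero_le _) (Finset.mem_range_succ_iff.2 hp)

theorem CE.univ : CE Set.univ := ⟨pure 0, .zero, fun _ => iff_of_true trivial trivial⟩

theorem CE.empty : CE ∅ := ⟨fun _ => Part.none, .none, fun _ => by simp⟩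

theorem CE.inter {A B : Set ℕ} (hA : CE A) (hB : CE B) : CE (A ∩ B) := by
  obtain ⟨f, hf, hfA⟩ := hA
  obtain ⟨g, hg, hgB⟩ := hB
  refine ⟨fun n => (f n).bind fun _ => g n, Partrec.nat_iff.1 ?_, fun n => ?_⟩
  · exact (Partrec.nat_iff.2 hf).bind ((Partrec.nat_iff.2 hg).comp Computable.fst)
  · simp [hfA, hgB, Part.bind_dom]

theorem CE.union {A B : Set ℕ} (hA : CE A) (hB : CE B) : CE (A ∪ B) := by
  obtain ⟨f, hf, hfA⟩ := hA
  obtain ⟨g, hg, hgB⟩ := hB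
  obtain ⟨k, hk, hkdom⟩ := Nat.Partrec.merge' hf hg
  exact ⟨k, hk, fun n => by simp [hfA, hgB, (hkdom n).2]⟩

theorem CE.preimage {A : Set ℕ} (hA : CE A) {f : ℕ → ℕ} (hf : Computable f) : CE (f ⁻¹' A) := by
  obtain ⟨g, hg, hgA⟩ := hA
  exact ⟨fun n => g (f n), Partrec.nat_iff.1 ((Partrec.nat_iff.2 hg).comp hf), fun n => hgA _⟩

theorem ComputablePred.ce {p : ℕ → Prop} (hp : ComputablePred p) : CE {n | p n} := by
  obtain ⟨_, hp⟩ := hp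
  convert ce_setOf_exists (W := fun _ n => decide (p n)) (hp.comp Computable.snd)
  simp

theorem CE.exists_le {S : Set ℕ} (hS : CE S) {b : ℕ → ℕ} (hb : Primrec b) {R : ℕ → ℕ → Prop}
    (hR : PrimrecRel R) : CE {q | ∃ p ≤ b q, p ∈ S ∧ R q p} := by
  classical
  obtain ⟨E⟩ := hS.nonempty_enumeration
  have hstage : PrimrecRel fun (p : ℕ) (sq : ℕ × ℕ) => (E.W sq.1 p && decide (R sq.2 p)) = true :=
    Primrec.eq.comp (Primrec.and.comp (E.primrec.comp (Primrec.fst.comp Primrec.snd) Primrec.fst)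
      (hR.decide.comp (Primrec.snd.comp Primrec.snd) Primrec.fst)) (Primrec.const true)
  have hW : Primrec₂ fun s q =>
      decide (∃ p ∈ List.range (b q + 1), (E.W s p && decide (R q p)) = true) :=
    (hstage.exists_mem_list.comp (Primrec.list_range.comp (Primrec.succ.comp
      (hb.comp Primrec.snd))) Primrec.id).decide.of_eq fun _ => by simp
  convert ce_setOf_exists hW.to_comp using 1
  ext q
  simp only [Set.mem_ofPred_eq, E.mem_iff, List.mem_range, Nat.lt_succ_iff, Bool.and_eq_true,
    decide_eq_true_eq]
  exact ⟨fun ⟨p, hp, ⟨s, hs⟩, hR⟩ => ⟨s, p, hp, hs, hR⟩,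
    fun ⟨s, p, hp, hs, hR⟩ => ⟨p, hp, ⟨s, hs⟩, hR⟩⟩

structure IsSeparatorBasis (L : List (Set ℕ)) (U V : Set ℕ) : Prop where
  exists_separator : ∀ A ∈ L, ∃ X, SetTuringRed X A ∧ U ⊆ X ∧ X ⊆ V
  exists_reduces : ∀ X, U ⊆ X → X ⊆ V → ∃ A ∈ L, SetTuringRed A X

namespace IsSeparatorBasis

variable {L : List (Set ℕ)} {U V : Set ℕ}

theorem nil : IsSeparatorBasis [] Set.univ ∅ where
  exists_separator _ h := absurd h List.not_mem_nil
  exists_reduces _ hU hV := absurd (hV (hU (Set.mem_univ 0))) (Set.notMem_empty 0)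

theorem subset (h : IsSeparatorBasis L U V) {A : Set ℕ} (hA : A ∈ L) : U ⊆ V := by
  obtain ⟨X, -, hUX, hXV⟩ := h.exists_separator A hA
  exact hUX.trans hXV

theorem exists_separator_iff (h : IsSeparatorBasis L U V) (Y : Set ℕ) :
    (∃ X, SetTuringRed X Y ∧ U ⊆ X ∧ X ⊆ V) ↔ ∃ A ∈ L, SetTuringRed A Y := by
  constructor
  · rintro ⟨X, hXY, hUX, hXV⟩
    obtain ⟨A, hA, hAX⟩ := h.exists_reduces X hUX hXV
    exact ⟨A, hA, hAX.trans hXY⟩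
  · rintro ⟨A, hA, hAY⟩
    obtain ⟨X, hXA, hUX, hXV⟩ := h.exists_separator A hA
    exact ⟨X, hXA.trans hAY, hUX, hXV⟩

end IsSeparatorBasis

def posElem (q : ℕ) : ℕ := q.unpair.1.unpair.1

def posBound (q : ℕ) : ℕ := q.unpair.1.unpair.2

def posStage (q : ℕ) : ℕ := q.unpair.2

@[simp]
theorem posElem_pair (x t v : ℕ) : posElem (Nat.pair (Nat.pair x t) v) = x := by simp [posElem]

@[simp]
theorem posBound_pair (x t v : ℕ) : posBound (Nat.pair (Nat.pair x t) v) = t := by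
  simp [posBound]

@[simp]
theorem posStage_pair (x t v : ℕ) : posStage (Nat.pair (Nat.pair x t) v) = v := by
  simp [posStage]

theorem primrec_posElem : Primrec posElem :=
  (Primrec.fst.comp Primrec.unpair).comp (Primrec.fst.comp Primrec.unpair)

theorem primrec_posBound : Primrec posBound :=
  (Primrec.snd.comp Primrec.unpair).comp (Primrec.fst.comp Primrec.unpair)

theorem primrec_posStage : Primrec posStage := Primrec.snd.comp Primrec.unpair

section Construction

variable {B V' : Set ℕ} (E : Enumeration B) (EV' : Enumeration V')

def lateSet : Set ℕ := {q | posElem q ∈ B ∧ E.W (posBound q) (posElem q) = false}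

def lagSet (S : Set ℕ) : Set ℕ := {q | ∃ p ≤ posBound q, p ∈ S ∧ EV'.W (posStage q) p = false}

theorem ce_lateSet : CE (lateSet E) :=
  (E.ce.preimage primrec_posElem.to_comp).inter (PrimrecPred.computablePred
    (Primrec.eq.comp (E.primrec.comp primrec_posBound primrec_posElem) (Primrec.const false))).ce

theorem primrecRel_W_posStage_eq_false : PrimrecRel fun q p => EV'.W (posStage q) p = false :=
  Primrec.eq.comp (EV'.primrec.comp (primrec_posStage.comp Primrec.fst) Primrec.snd)
    (Primrec.const false)

theorem ce_lagSet {S : Set ℕ} (hS : CE S) : CE (lagSet EV' S) :=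
  hS.exists_le primrec_posBound (primrecRel_W_posStage_eq_false EV')

theorem setTuringRed_lateSet : SetTuringRed (lateSet E) B := by
  refine SetTuringRed.of_mem_iff (p := fun q c => (c == 1) && !E.W (posBound q) (posElem q))
    ?_ (RecursiveIn'.oracle_comp primrec_posElem.to_comp) fun q => ?_
  · exact (Primrec.and.comp (Primrec.beq.comp Primrec.snd (Primrec.const 1))
      (Primrec.not.comp (E.primrec.comp (primrec_posBound.comp Primrec.fst)
        (primrec_posElem.comp Primrec.fst)))).to_comp
  · simp [lateSet]

theorem setTuringRed_lagSet (S : Set ℕ) : SetTuringRed (lagSet EV' S) S :=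
  SetTuringRed.exists_le primrec_posBound (primrecRel_W_posStage_eq_false EV')

theorem lagSet_mono {S T : Set ℕ} (h : S ⊆ T) : lagSet EV' S ⊆ lagSet EV' T :=
  fun _ ⟨p, hp, hpS, hpv⟩ => ⟨p, hp, h hpS, hpv⟩

theorem setTuringRed_of_forall_lateSet_mem {X : Set ℕ} (hXV : X ⊆ lateSet E ∪ lagSet EV' V')
    {n : ℕ} (hn : ∀ q ∈ lateSet E, n < posBound q → q ∈ X) : SetTuringRed B X := by
  obtain ⟨v, hv⟩ := EV'.exists_stage_forall_le (n + 1)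
  refine SetTuringRed.of_mem_iff (p := fun a c => E.W (n + 1) a || c == 1) ?_
    (RecursiveIn'.oracle_comp (e := fun a => Nat.pair (Nat.pair a (n + 1)) v) ?_) fun a => ?_
  · exact (Primrec.or.comp (E.primrec.comp (Primrec.const (n + 1)) Primrec.fst)
      (Primrec.beq.comp Primrec.snd (Primrec.const 1))).to_comp
  · exact (Primrec₂.natPair.comp (Primrec₂.natPair.comp Primrec.id (Primrec.const (n + 1)))
      (Primrec.const v)).to_comp
  · simp only [Bool.or_eq_true, beq_iff_eq, chi_eq_one]
    constructor
    · intro ha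
      by_cases hW : E.W (n + 1) a = true
      · exact Or.inl hW
      · exact Or.inr (hn _ ⟨by simpa using ha, by simpa using hW⟩ (by simp))
    · rintro (hW | hX)
      · exact (E.mem_iff a).2 ⟨_, hW⟩
      · rcases hXV hX with ⟨ha, -⟩ | ⟨p, hp, hpV, hpv⟩
        · simpa using ha
        · simp only [posBound_pair, posStage_pair] at hp hpv
          simp [hv p hp hpV] at hpv

/-- The codes `⟨p, ⟨q, s⟩⟩` of late positions `q ∉ X` with `p < t`, where `x ∈ B_s`. -/
def omittedSet (X : Set ℕ) : Set ℕ :=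
  {m | m.unpair.1 < posBound m.unpair.2.unpair.1 ∧
    E.W m.unpair.2.unpair.2 (posElem m.unpair.2.unpair.1) = true ∧
    E.W (posBound m.unpair.2.unpair.1) (posElem m.unpair.2.unpair.1) = false ∧
    m.unpair.2.unpair.1 ∉ X}

theorem setTuringRed_omittedSet (X : Set ℕ) : SetTuringRed (omittedSet E X) X := by
  have hq : Primrec fun m : ℕ => m.unpair.2.unpair.1 :=
    (Primrec.fst.comp Primrec.unpair).comp (Primrec.snd.comp Primrec.unpair)
  have hs : Primrec fun m : ℕ => m.unpair.2.unpair.2 :=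
    (Primrec.snd.comp Primrec.unpair).comp (Primrec.snd.comp Primrec.unpair)
  let isLate : ℕ → Bool := fun m => decide (m.unpair.1 < posBound m.unpair.2.unpair.1) &&
    E.W m.unpair.2.unpair.2 (posElem m.unpair.2.unpair.1) &&
    !E.W (posBound m.unpair.2.unpair.1) (posElem m.unpair.2.unpair.1)
  have hlate : Primrec isLate :=
    Primrec.and.comp (Primrec.and.comp
      (Primrec.nat_lt.decide.comp (Primrec.fst.comp Primrec.unpair) (primrec_posBound.comp hq))
      (E.primrec.comp hs (primrec_posElem.comp hq)))
      (Primrec.not.comp (E.primrec.comp (primrec_posBound.comp hq) (primrec_posElem.comp hq)))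
  refine SetTuringRed.of_mem_iff (p := fun m c => isLate m && c == 0)
    (Primrec.and.comp (hlate.comp Primrec.fst)
      (Primrec.beq.comp Primrec.snd (Primrec.const 0))).to_comp
    (RecursiveIn'.oracle_comp hq.to_comp) fun m => ?_
  simp [omittedSet, isLate, and_assoc]

theorem exists_separator_of_forall_lateSet_not_mem {U' X : Set ℕ}
    (hUX : lateSet E ∩ lagSet EV' U' ⊆ X) (h : ∀ n, ∃ q ∈ lateSet E, n < posBound q ∧ q ∉ X) :
    ∃ X', SetTuringRed X' X ∧ U' ⊆ X' ∧ X' ⊆ V' := by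
  have hex : ∀ p, ∃ n, Nat.pair p n ∈ omittedSet E X := by
    intro p
    obtain ⟨q, ⟨hqB, hqt⟩, hpq, hqX⟩ := h p
    obtain ⟨s, hs⟩ := (E.mem_iff _).1 hqB
    exact ⟨Nat.pair q s, by simpa [omittedSet] using ⟨hpq, hs, hqt, hqX⟩⟩
  obtain ⟨w, hw, hwR⟩ := RecursiveIn'.exists_choice (setTuringRed_omittedSet E X) hex
  refine ⟨{p | EV'.W (posStage (w p).unpair.1) p = true}, ?_, fun p hp => ?_,
    fun p hp => (EV'.mem_iff p).2 ⟨_, hp⟩⟩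
  · exact SetTuringRed.of_mem_iff (p := fun p n => EV'.W (posStage n.unpair.1) p)
      (EV'.primrec.comp ((primrec_posStage.comp (Primrec.fst.comp Primrec.unpair)).comp
        Primrec.snd) Primrec.fst).to_comp hw fun p => Iff.rfl
  · obtain ⟨hpt, hs, hqt, hqX⟩ := by simpa [omittedSet] using hwR p
    have hqlag : (w p).unpair.1 ∉ lagSet EV' U' := fun hlag =>
      hqX (hUX ⟨⟨(E.mem_iff _).2 ⟨_, hs⟩, hqt⟩, hlag⟩)
    simpa [lagSet] using fun hv => hqlag ⟨p, hpt.le, hp, hv⟩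

theorem IsSeparatorBasis.cons {L : List (Set ℕ)} {U' : Set ℕ} (hbasis : IsSeparatorBasis L U' V') :
    IsSeparatorBasis (B :: L) (lateSet E ∩ lagSet EV' U') (lateSet E ∪ lagSet EV' V') where
  exists_separator A hA := by
    rcases List.mem_cons.1 hA with rfl | hA
    · exact ⟨lateSet E, setTuringRed_lateSet E, Set.inter_subset_left, Set.subset_union_left⟩
    · obtain ⟨X', hX'A, hUX', hX'V⟩ := hbasis.exists_separator A hA
      exact ⟨lagSet EV' X', (setTuringRed_lagSet EV' X').trans hX'A,
        Set.inter_subset_right.trans (lagSet_mono EV' hUX'),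
        (lagSet_mono EV' hX'V).trans Set.subset_union_right⟩
  exists_reduces X hUX hXV := by
    by_cases hcase : ∃ n, ∀ q ∈ lateSet E, n < posBound q → q ∈ X
    · obtain ⟨n, hn⟩ := hcase
      exact ⟨B, List.mem_cons_self, setTuringRed_of_forall_lateSet_mem E EV' hXV hn⟩
    · push Not at hcase
      obtain ⟨X', hX'X, hUX', hX'V⟩ := exists_separator_of_forall_lateSet_not_mem E EV' hUX hcase
      obtain ⟨A, hA, hAX'⟩ := hbasis.exists_reduces X' hUX' hX'V
      exact ⟨A, List.mem_cons_of_mem _ hA, hAX'.trans hX'X⟩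

end Construction

theorem exists_ce_isSeparatorBasis : ∀ L : List (Set ℕ), (∀ A ∈ L, CE A) →
    ∃ U V, CE U ∧ CE V ∧ IsSeparatorBasis L U V
  | [], _ => ⟨Set.univ, ∅, CE.univ, CE.empty, IsSeparatorBasis.nil⟩
  | B :: L, hL => by
    obtain ⟨U', V', hU', hV', hbasis⟩ :=
      exists_ce_isSeparatorBasis L fun A hA => hL A (List.mem_cons_of_mem _ hA)
    obtain ⟨E⟩ := (hL B List.mem_cons_self).nonempty_enumeration
    obtain ⟨EV'⟩ := hV'.nonempty_enumeration
    exact ⟨_, _, (ce_lateSet E).inter (ce_lagSet EV' hU'), (ce_lateSet E).union (ce_lagSet EV' hV'),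
      hbasis.cons E EV'⟩

theorem stmt4_general (k : ℕ) (hk : 0 < k) (A : Fin k → Set ℕ)
    (hce : ∀ i, CE (A i)) :
    ∃ U V : Set ℕ, CE U ∧ CE V ∧ U ⊆ V ∧
      ∀ Y : Set ℕ, (∃ X : Set ℕ, SetTuringRed X Y ∧ U ⊆ X ∧ X ⊆ V) ↔
        ∃ i, SetTuringRed (A i) Y := by
  obtain ⟨U, V, hU, hV, hbasis⟩ :=
    exists_ce_isSeparatorBasis (List.ofFn A) (List.forall_mem_ofFn_iff.2 hce)
  refine ⟨U, V, hU, hV, hbasis.subset (List.mem_ofFn.2 ⟨⟨0, hk⟩, rfl⟩), fun Y => ?_⟩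
  simp [hbasis.exists_separator_iff, List.mem_ofFn]

theorem stmt4 (k : ℕ) (hk : 0 < k) (A : Fin k → Set ℕ)
    (hce : ∀ i, CE (A i)) (hnz : ∀ i, ¬ComputablePred (· ∈ A i)) :
    ∃ U V : Set ℕ, CE U ∧ CE V ∧ U ⊆ V ∧
      ∀ Y : Set ℕ, (∃ X : Set ℕ, SetTuringRed X Y ∧ U ⊆ X ∧ X ⊆ V) ↔
        ∃ i, SetTuringRed (A i) Y :=
  stmt4_general k hk A hce
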